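/- arXiv:2111.06391 — 4 statements merged into one kernel-verified Lean document; each statement's English description precedes it below -/
import Mathlib

section
/- Let a, b ∈ ℓ¹₁ and let x(t) = a₀ + 2 Σ_{k≥1} a_k T_k(t) and y(t) = b₀ + 2 Σ_{k≥1} b_k T_k(t) be the associated Chebyshev series on [−1,1]. Then the convolution a∗b belongs to ℓ¹₁ and for every t ∈ [−1,1] the pointwise product satisfies x(t) y(t) = (a∗b)₀ + 2 Σ_{k≥1} (a∗b)_k T_k(t); that is, the product of two Chebyshev series corresponds to the discrete convolution of their coefficient sequences. -/
open Polynomial Polynomial.Chebyshev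

/-- The weights `ω₀ = 1`, `ω_k = 2 ν^k` for `k ≥ 1` of the `ℓ¹_ν` space. -/
noncomputable def ellOneNuWeight (ν : ℝ) (k : ℕ) : ℝ :=
  if k = 0 then 1 else 2 * ν ^ k

/-- Membership in `ℓ¹_ν`: the weighted series `Σ ω_k |b_k|` converges. -/
def MemEllOneNu (ν : ℝ) (b : ℕ → ℝ) : Prop :=
  Summable fun k => ellOneNuWeight ν k * |b k|

/-- Discrete convolution `(a∗b)_k = Σ_{k₁+k₂=k, k₁,k₂ ∈ ℤ} a_{|k₁|} b_{|k₂|}`. -/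
noncomputable def discreteConv (a b : ℕ → ℝ) (k : ℕ) : ℝ :=
  ∑' m : ℤ, a m.natAbs * b ((k : ℤ) - m).natAbs

/-- The Chebyshev series `x(t) = a₀ + 2 Σ_{k≥1} a_k T_k(t)` of a coefficient
sequence `a`. -/
noncomputable def chebSeries (a : ℕ → ℝ) (t : ℝ) : ℝ :=
  a 0 + 2 * ∑' k : ℕ, a (k + 1) * (T ℝ (k + 1)).eval t

/-- The reindexing `(k, m) ↦ (m, k - m)` of `ℤ × ℤ`. -/
def convEquiv : ℤ × ℤ ≃ ℤ × ℤ where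
  toFun p := (p.2, p.1 - p.2)
  invFun p := (p.1 + p.2, p.1)
  left_inv p := by simp [Prod.ext_iff]
  right_inv p := by simp [Prod.ext_iff]

lemma memEllOneNu_abs_summable {c : ℕ → ℝ} (hc : MemEllOneNu 1 c) :
    Summable fun k => |c k| := by
  refine Summable.of_nonneg_of_le (fun k => abs_nonneg _) (fun k => ?_) hc
  unfold ellOneNuWeight
  rcases Nat.eq_zero_or_pos k with h | h
  · simp [h]
  · rw [if_neg h.ne', one_pow]
    nlinarith [abs_nonneg (c k)]

lemma abs_summable_int {c : ℕ → ℝ} (hc : Summable fun k => |c k|) :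
    Summable fun m : ℤ => |c m.natAbs| := by
  refine Summable.of_nat_of_neg ?_ ?_ <;> simpa using hc

/-- Folding lemma: the symmetric `ℤ`-indexed exponential series sums to the cosine
series value. -/
lemma hasSum_fold (c : ℕ → ℝ) (hc : Summable fun k => |c k|) (θ : ℝ) :
    HasSum (fun m : ℤ => (c m.natAbs : ℂ) * Complex.exp ((m : ℂ) * θ * Complex.I))
      (((c 0 + 2 * ∑' k : ℕ, c (k + 1) * Real.cos ((k + 1) * θ) : ℝ)) : ℂ) := by
  set f : ℤ → ℂ := fun m => (c m.natAbs : ℂ) * Complex.exp ((m : ℂ) * θ * Complex.I) with hf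
  have hnorm : ∀ m : ℤ, ‖f m‖ = |c m.natAbs| := by
    intro m
    have h1 : ((m : ℂ) * θ * Complex.I) = ((m * θ : ℝ) : ℂ) * Complex.I := by push_cast; ring
    rw [hf]
    simp only [norm_mul, h1, Real.norm_eq_abs, Complex.norm_exp_ofReal_mul_I,
      Complex.norm_real, mul_one]
  have hcs : Summable fun k : ℕ => |c (k + 1)| := (summable_nat_add_iff 1).2 hc
  have hp : Summable fun n : ℕ => f ((n : ℤ) + 1) := by
    apply Summable.of_norm
    have : ∀ n : ℕ, ‖f ((n : ℤ) + 1)‖ = |c (n + 1)| := by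
      intro n
      have h1 : ((n : ℤ) + 1).natAbs = n + 1 := by omega
      rw [hnorm, h1]
    simpa only [this] using hcs
  have hm : Summable fun n : ℕ => f (-((n : ℤ) + 1)) := by
    apply Summable.of_norm
    have : ∀ n : ℕ, ‖f (-((n : ℤ) + 1))‖ = |c (n + 1)| := by
      intro n
      have h1 : (-((n : ℤ) + 1)).natAbs = n + 1 := by omega
      rw [hnorm, h1]
    simpa only [this] using hcs
  have hS : Summable fun k : ℕ => c (k + 1) * Real.cos ((k + 1) * θ) := by
    apply Summable.of_abs
    refine Summable.of_nonneg_of_le (fun k => abs_nonneg _) (fun k => ?_) hcs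
    rw [abs_mul]
    calc |c (k + 1)| * |Real.cos ((k + 1) * θ)| ≤ |c (k + 1)| * 1 := by
          gcongr; exact Real.abs_cos_le_one _
    _ = |c (k + 1)| := mul_one _
  set S := ∑' k : ℕ, c (k + 1) * Real.cos ((k + 1) * θ) with hSdef
  have hterm : ∀ n : ℕ, f ((n : ℤ) + 1) + f (-((n : ℤ) + 1))
      = ((2 * (c (n + 1) * Real.cos ((n + 1) * θ)) : ℝ) : ℂ) := by
    intro n
    have h1 : ((n : ℤ) + 1).natAbs = n + 1 := by omega
    have h2 : (-((n : ℤ) + 1)).natAbs = n + 1 := by omega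
    rw [hf]
    simp only [h1, h2]
    have e1 : (((n : ℤ) : ℂ) + 1) * θ * Complex.I
        = (((n + 1) * θ : ℝ) : ℂ) * Complex.I := by push_cast; ring
    have e2 : ((-(((n : ℤ)) + 1) : ℤ) : ℂ) * θ * Complex.I
        = -((((n + 1) * θ : ℝ) : ℂ)) * Complex.I := by push_cast; ring
    push_cast
    rw [show ((n : ℂ) + 1) * (θ : ℂ) * Complex.I = (((n : ℂ) + 1) * θ) * Complex.I by ring,
      show (-((n : ℂ) + 1)) * (θ : ℂ) * Complex.I = -(((n : ℂ) + 1) * θ) * Complex.I by ring]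
    rw [← mul_add, ← Complex.two_cos]
    have : (((n : ℂ) + 1) * θ) = ((((n : ℝ) + 1) * θ : ℝ) : ℂ) := by push_cast; ring
    rw [this, ← Complex.ofReal_cos]
    push_cast
    ring
  have h2S : HasSum (fun n : ℕ => f ((n : ℤ) + 1) + f (-((n : ℤ) + 1))) ((2 * S : ℝ) : ℂ) := by
    have hh := Complex.ofRealCLM.hasSum ((hS.hasSum).mul_left 2)
    have heq : (fun n : ℕ => f ((n : ℤ) + 1) + f (-((n : ℤ) + 1)))
        = fun n : ℕ => ((2 * (c (n + 1) * Real.cos ((n + 1) * θ)) : ℝ) : ℂ) :=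
      funext hterm
    rw [heq, hSdef]
    simpa only [Complex.ofRealCLM_apply, Complex.ofReal_mul, Complex.ofReal_ofNat] using hh
  have h0 : f 0 = (c 0 : ℂ) := by simp [hf]
  have htot : HasSum f ((∑' n : ℕ, f ((n : ℤ) + 1)) + f 0 + ∑' n : ℕ, f (-((n : ℤ) + 1))) :=
    HasSum.of_add_one_of_neg_add_one hp.hasSum hm.hasSum
  have hval : (∑' n : ℕ, f ((n : ℤ) + 1)) + ∑' n : ℕ, f (-((n : ℤ) + 1)) = ((2 * S : ℝ) : ℂ) :=
    (hp.hasSum.add hm.hasSum).unique h2S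
  convert htot using 1
  rw [h0, show (∑' n : ℕ, f ((n : ℤ) + 1)) + (c 0 : ℂ) + ∑' n : ℕ, f (-((n : ℤ) + 1))
      = ((∑' n : ℕ, f ((n : ℤ) + 1)) + ∑' n : ℕ, f (-((n : ℤ) + 1))) + (c 0 : ℂ) by ring, hval]
  push_cast
  ring

lemma chebSeries_eq_cos (c : ℕ → ℝ) {t : ℝ} (ht : t ∈ Set.Icc (-1 : ℝ) 1) :
    chebSeries c t = c 0 + 2 * ∑' k : ℕ, c (k + 1) * Real.cos ((k + 1) * Real.arccos t) := by
  unfold chebSeries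
  congr 2
  apply tsum_congr
  intro k
  have hcos : Real.cos (Real.arccos t) = t := Real.cos_arccos ht.1 ht.2
  congr 1
  conv_lhs => rw [← hcos]
  rw [Polynomial.Chebyshev.T_real_cos]
  push_cast
  ring_nf

set_option maxHeartbeats 1000000

/-- **Products of Chebyshev series correspond to discrete convolutions.**
If `a, b ∈ ℓ¹₁`, then `a∗b ∈ ℓ¹₁` and the pointwise product of the associated Chebyshev
series `x` and `y` is the Chebyshev series of `a∗b` on `[-1,1]`. -/
theorem chebSeries_mul_eq_conv (a b : ℕ → ℝ)
    (ha : MemEllOneNu 1 a) (hb : MemEllOneNu 1 b) :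
    MemEllOneNu 1 (discreteConv a b) ∧
      ∀ t ∈ Set.Icc (-1 : ℝ) 1,
        chebSeries a t * chebSeries b t = chebSeries (discreteConv a b) t := by
  have ha' := memEllOneNu_abs_summable ha
  have hb' := memEllOneNu_abs_summable hb
  have haZ := abs_summable_int ha'
  have hbZ := abs_summable_int hb'
  -- summability of the full grid of products of absolute values
  have h1 : Summable fun p : ℤ × ℤ => |a p.1.natAbs| * |b p.2.natAbs| :=
    haZ.mul_of_nonneg hbZ (fun _ => abs_nonneg _) fun _ => abs_nonneg _
  have hgrid : Summable fun p : ℤ × ℤ => |a p.2.natAbs| * |b (p.1 - p.2).natAbs| :=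
    (convEquiv.summable_iff).2 h1
  have hfibabs : ∀ k : ℤ, Summable fun m : ℤ => |a m.natAbs| * |b (k - m).natAbs| :=
    fun k => hgrid.prod_factor k
  have hfib : ∀ k : ℤ, Summable fun m : ℤ => a m.natAbs * b (k - m).natAbs := by
    intro k
    apply Summable.of_abs
    simpa only [abs_mul] using hfibabs k
  -- the symmetrized convolution and its properties
  set cz : ℤ → ℝ := fun k => ∑' m : ℤ, a m.natAbs * b (k - m).natAbs with hcz
  have hczeven : ∀ k : ℤ, cz (-k) = cz k := by
    intro k
    rw [hcz]
    simp only
    rw [← (Equiv.neg ℤ).tsum_eq (fun m => a m.natAbs * b (-k - m).natAbs)]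
    apply tsum_congr
    intro m
    simp only [Equiv.neg_apply]
    congr 1
    · congr 1; omega
    · congr 1; omega
  have hczconv : ∀ k : ℤ, cz k = discreteConv a b k.natAbs := by
    intro k
    rcases Int.natAbs_eq k with h | h
    · rw [discreteConv, hcz]
      simp only
      rw [← h]
    · rw [← hczeven, discreteConv, hcz]
      simp only
      rw [← neg_eq_iff_eq_neg.2 h]
  set H : ℤ → ℝ := fun k => ∑' m : ℤ, |a m.natAbs| * |b (k - m).natAbs| with hH
  have hHsum : Summable H := hgrid.prod
  have hHnonneg : ∀ k, 0 ≤ H k := fun k =>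
    tsum_nonneg fun m => mul_nonneg (abs_nonneg _) (abs_nonneg _)
  have hczbound : ∀ k : ℤ, |cz k| ≤ H k := by
    intro k
    rw [hcz, hH]
    simp only
    have hn1 : Summable fun m : ℤ => ‖a m.natAbs * b (k - m).natAbs‖ := by
      simpa only [Real.norm_eq_abs, abs_mul] using hfibabs k
    have h2 := norm_tsum_le_tsum_norm hn1
    rw [Real.norm_eq_abs] at h2
    refine h2.trans_eq ?_
    apply tsum_congr; intro m; rw [Real.norm_eq_abs, abs_mul]
  -- membership of the convolution
  have hmem : MemEllOneNu 1 (discreteConv a b) := by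
    unfold MemEllOneNu
    have hHnat : Summable fun n : ℕ => H (n : ℤ) + H (-(n : ℤ)) := by
      have h1 : Summable fun n : ℕ => H (n : ℤ) :=
        hHsum.comp_injective fun x y h => by exact_mod_cast h
      have h2 : Summable fun n : ℕ => H (-(n : ℤ)) :=
        hHsum.comp_injective fun x y h => by
          simp only [neg_inj] at h; exact_mod_cast h
      exact h1.add h2
    refine Summable.of_nonneg_of_le (fun k => ?_) (fun k => ?_) hHnat
    · apply mul_nonneg _ (abs_nonneg _)
      unfold ellOneNuWeight
      split <;> norm_num
    · have hck : discreteConv a b k = cz (k : ℤ) := by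
        rw [hczconv]; simp
      rcases Nat.eq_zero_or_pos k with h | h
      · subst h
        have hw : ellOneNuWeight 1 0 = 1 := if_pos rfl
        rw [hw, one_mul, hck]
        simp only [Nat.cast_zero, neg_zero]
        have hb0 := hczbound 0
        have h0 := hHnonneg 0
        linarith
      · rw [show ellOneNuWeight 1 k = 2 by unfold ellOneNuWeight; rw [if_neg h.ne', one_pow]; norm_num]
        have hb1 := hczbound (k : ℤ)
        have hb2 := hczbound (-(k : ℤ))
        rw [hczeven] at hb2
        rw [hck]
        linarith
  refine ⟨hmem, ?_⟩
  -- the pointwise identity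
  intro t ht
  set θ := Real.arccos t with hθ
  set F : ℤ → ℂ := fun m => (a m.natAbs : ℂ) * Complex.exp ((m : ℂ) * θ * Complex.I) with hF
  set G : ℤ → ℂ := fun m => (b m.natAbs : ℂ) * Complex.exp ((m : ℂ) * θ * Complex.I) with hG
  have hnorm : ∀ (c : ℕ → ℝ) (m : ℤ),
      ‖(c m.natAbs : ℂ) * Complex.exp ((m : ℂ) * θ * Complex.I)‖ = |c m.natAbs| := by
    intro c m
    have h1 : ((m : ℂ) * θ * Complex.I) = ((m * θ : ℝ) : ℂ) * Complex.I := by push_cast; ring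
    simp only [norm_mul, h1, Real.norm_eq_abs, Complex.norm_exp_ofReal_mul_I,
      Complex.norm_real, mul_one]
  have hX : HasSum F ((chebSeries a t : ℝ) : ℂ) := by
    rw [chebSeries_eq_cos a ht]
    exact hasSum_fold a ha' θ
  have hY : HasSum G ((chebSeries b t : ℝ) : ℂ) := by
    rw [chebSeries_eq_cos b ht]
    exact hasSum_fold b hb' θ
  have hFG : Summable fun p : ℤ × ℤ => F p.1 * G p.2 := by
    apply Summable.of_norm
    have : ∀ p : ℤ × ℤ, ‖F p.1 * G p.2‖ = |a p.1.natAbs| * |b p.2.natAbs| := by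
      intro p
      rw [norm_mul, hF, hG, hnorm a, hnorm b]
    simpa only [this] using h1
  have hprod : HasSum (fun p : ℤ × ℤ => F p.1 * G p.2)
      (((chebSeries a t : ℝ) : ℂ) * ((chebSeries b t : ℝ) : ℂ)) := hX.mul hY hFG
  have hre : HasSum (fun p : ℤ × ℤ => F p.2 * G (p.1 - p.2))
      (((chebSeries a t : ℝ) : ℂ) * ((chebSeries b t : ℝ) : ℂ)) :=
    (convEquiv.hasSum_iff).2 hprod
  have hfibC : ∀ k : ℤ, HasSum (fun m : ℤ => F m * G (k - m))
      ((cz k : ℂ) * Complex.exp ((k : ℂ) * θ * Complex.I)) := by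
    intro k
    have hsum : HasSum (fun m : ℤ => ((a m.natAbs * b (k - m).natAbs : ℝ) : ℂ)) ((cz k : ℝ) : ℂ) := by
      simpa only [Complex.ofRealCLM_apply] using Complex.ofRealCLM.hasSum (hfib k).hasSum
    have hh := hsum.mul_right (Complex.exp ((k : ℂ) * θ * Complex.I))
    have heq : (fun m : ℤ => F m * G (k - m))
        = fun m : ℤ => ((a m.natAbs * b (k - m).natAbs : ℝ) : ℂ)
            * Complex.exp ((k : ℂ) * θ * Complex.I) := by
      funext m
      have hx : Complex.exp ((m : ℂ) * θ * Complex.I)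
          * Complex.exp (((k - m : ℤ) : ℂ) * θ * Complex.I)
          = Complex.exp ((k : ℂ) * θ * Complex.I) := by
        rw [← Complex.exp_add]; congr 1; push_cast; ring
      rw [hF, hG]
      simp only
      rw [mul_mul_mul_comm, hx]
      push_cast
      ring
    rw [heq]
    exact hh
  have hC : HasSum (fun k : ℤ => (cz k : ℂ) * Complex.exp ((k : ℂ) * θ * Complex.I))
      (((chebSeries a t : ℝ) : ℂ) * ((chebSeries b t : ℝ) : ℂ)) :=
    hre.prod_fiberwise hfibC
  have hconvabs : Summable fun k : ℕ => |discreteConv a b k| := memEllOneNu_abs_summable hmem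
  have hC' : HasSum (fun k : ℤ => ((discreteConv a b) k.natAbs : ℂ)
      * Complex.exp ((k : ℂ) * θ * Complex.I))
      ((chebSeries (discreteConv a b) t : ℝ) : ℂ) := by
    rw [chebSeries_eq_cos (discreteConv a b) ht]
    exact hasSum_fold (discreteConv a b) hconvabs θ
  have heqf : (fun k : ℤ => (cz k : ℂ) * Complex.exp ((k : ℂ) * θ * Complex.I))
      = fun k : ℤ => ((discreteConv a b) k.natAbs : ℂ)
          * Complex.exp ((k : ℂ) * θ * Complex.I) := by
    funext k
    rw [hczconv k]
  rw [heqf] at hC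
  have hfin := hC.unique hC'
  rw [← Complex.ofReal_mul] at hfin
  exact_mod_cast hfin
end

section
/- Let ν ≥ 1, let n, N ∈ ℕ, and let ᾱ = (ᾱ₀, ᾱ₁, …, ᾱ_N, 0, 0, …) ∈ ℓ¹_ν be a sequence vanishing beyond index N. For 0 ≤ k ≤ n+1 define the linear functional ℓ̂^k_ᾱ on ℓ¹_ν by ℓ̂^k_ᾱ(h) := (ᾱ ∗ P^I h)_k = Σ_{k₁+k₂=k, k₁,k₂∈ℤ} ᾱ_{|k₁|} (P^I h)_{|k₂|}. Then for every h ∈ ℓ¹_ν one has |ℓ̂^k_ᾱ(h)| ≤ Ψ_k(ᾱ) ‖h‖_{ℓ¹_ν}, where Ψ_k(ᾱ) := max_{n < j ≤ k+N} ( |ᾱ_{|k−j|} + ᾱ_{k+j}| / (2 ν^j) ), with the convention ᾱ_m = 0 for m > N and Ψ_k(ᾱ) = 0 if the index set {j : n < j ≤ k+N} is empty. -/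
/-- The `ℓ¹_ν` norm `‖b‖ = Σ_{k≥0} ω_k |b_k|`. -/
noncomputable def ellOneNuNorm (ν : ℝ) (b : ℕ → ℝ) : ℝ :=
  ∑' k, ellOneNuWeight ν k * |b k|

/-- Tail projection `P^I`: `(P^I h)_j = 0` for `j ≤ n` and `(P^I h)_j = h_j` for `j > n`. -/
def tailProj (n : ℕ) (h : ℕ → ℝ) (j : ℕ) : ℝ :=
  if j ≤ n then 0 else h j

/-- The bound `Ψ_k(ᾱ) = max_{n < j ≤ k+N} |ᾱ_{|k−j|} + ᾱ_{k+j}| / (2ν^j)` (and `0`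
if the index set is empty). -/
noncomputable def PsiBound (ν : ℝ) (n N k : ℕ) (abar : ℕ → ℝ) : ℝ :=
  (Finset.Ioc n (k + N)).fold max 0
    (fun (j : ℕ) => |abar ((k : ℤ) - (j : ℤ)).natAbs + abar (k + j)| / (2 * ν ^ j))

/-- **Bound on the tail functional `ℓ̂^k_ᾱ(h) = (ᾱ ∗ P^I h)_k`.** If `ᾱ ∈ ℓ¹_ν` vanishes
beyond index `N` and `0 ≤ k ≤ n+1`, then `|(ᾱ ∗ P^I h)_k| ≤ Ψ_k(ᾱ) ‖h‖_{ℓ¹_ν}` for every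
`h ∈ ℓ¹_ν`. -/
theorem tail_functional_bound (ν : ℝ) (hν : 1 ≤ ν) (n N k : ℕ) (hk : k ≤ n + 1)
    (abar : ℕ → ℝ) (habar : MemEllOneNu ν abar)
    (hsupp : ∀ m : ℕ, N < m → abar m = 0)
    (h : ℕ → ℝ) (hh : MemEllOneNu ν h) :
    |discreteConv abar (tailProj n h) k| ≤ PsiBound ν n N k abar * ellOneNuNorm ν h := by
  classical
  set f : ℤ → ℝ := fun m => abar m.natAbs * tailProj n h ((k : ℤ) - m).natAbs with hf
  set A : Finset ℤ := Finset.Icc (-(N:ℤ)) ((k:ℤ) - n - 1) with hA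
  set B : Finset ℤ := Finset.Icc ((k:ℤ) + n + 1) (2*(k:ℤ) + N) with hB
  have key : discreteConv abar (tailProj n h) k
      = ∑ j ∈ Finset.Ioc n (k + N),
          (abar ((k : ℤ) - (j : ℤ)).natAbs + abar (k + j)) * h j := by
    have h1 : discreteConv abar (tailProj n h) k = ∑ m ∈ A ∪ B, f m := by
      apply tsum_eq_sum
      intro m hm
      simp only [Finset.mem_union, hA, hB, Finset.mem_Icc, not_or, not_and_or, not_le] at hm
      by_cases hN : N < m.natAbs
      · have h0 : abar m.natAbs = 0 := hsupp _ hN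
        simp [hf, h0]
      · push_neg at hN
        have : ((k : ℤ) - m).natAbs ≤ n := by omega
        simp [hf, tailProj, this]
    have hdisj : Disjoint A B := by
      rw [Finset.disjoint_left]
      intro m hmA hmB
      simp only [hA, hB, Finset.mem_Icc] at hmA hmB
      omega
    rw [h1, Finset.sum_union hdisj]
    have hAsum : ∑ m ∈ A, f m
        = ∑ j ∈ Finset.Ioc n (k + N), abar ((k : ℤ) - (j : ℤ)).natAbs * h j := by
      apply Finset.sum_nbij' (fun m => ((k:ℤ) - m).natAbs) (fun j => (k:ℤ) - j)
      · intro m hm; simp only [hA, Finset.mem_Icc] at hm; simp only [Finset.mem_Ioc]; omega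
      · intro j hj; simp only [Finset.mem_Ioc] at hj; simp only [hA, Finset.mem_Icc]; omega
      · intro m hm; simp only [hA, Finset.mem_Icc] at hm; omega
      · intro j hj; simp only [Finset.mem_Ioc] at hj; omega
      · intro m hm
        simp only [hA, Finset.mem_Icc] at hm
        have h2 : n < ((k:ℤ) - m).natAbs := by omega
        have h3 : ((k:ℤ) - (((k:ℤ) - m).natAbs : ℤ)).natAbs = m.natAbs := by omega
        show abar m.natAbs * tailProj n h ((k:ℤ) - m).natAbs
            = abar ((k:ℤ) - ((((k:ℤ) - m).natAbs : ℕ) : ℤ)).natAbs * h ((k:ℤ) - m).natAbs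
        rw [tailProj, if_neg (Nat.not_le.mpr h2), h3]
    have hBsum : ∑ m ∈ B, f m
        = ∑ j ∈ Finset.Ioc n (k + N), abar (k + j) * h j := by
      apply Finset.sum_nbij' (fun m => (m - (k:ℤ)).natAbs) (fun j => (k:ℤ) + j)
      · intro m hm; simp only [hB, Finset.mem_Icc] at hm; simp only [Finset.mem_Ioc]; omega
      · intro j hj; simp only [Finset.mem_Ioc] at hj; simp only [hB, Finset.mem_Icc]; omega
      · intro m hm; simp only [hB, Finset.mem_Icc] at hm; omega
      · intro j hj; simp only [Finset.mem_Ioc] at hj; omega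
      · intro m hm
        simp only [hB, Finset.mem_Icc] at hm
        have h2 : n < ((k:ℤ) - m).natAbs := by omega
        have h3 : m.natAbs = k + (m - (k:ℤ)).natAbs := by omega
        have h4 : ((k:ℤ) - m).natAbs = (m - (k:ℤ)).natAbs := by omega
        show abar m.natAbs * tailProj n h ((k:ℤ) - m).natAbs
            = abar (k + (m - (k:ℤ)).natAbs) * h ((m - (k:ℤ)).natAbs)
        rw [tailProj, if_neg (Nat.not_le.mpr h2), h3, h4]
    rw [hAsum, hBsum, ← Finset.sum_add_distrib]
    congr 1; ext j; ring
  rw [key]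
  set Ψ := PsiBound ν n N k abar with hΨ
  have hΨ0 : 0 ≤ Ψ := (Finset.le_fold_max _).mpr (Or.inl le_rfl)
  have hterm : ∀ j ∈ Finset.Ioc n (k + N),
      |(abar ((k : ℤ) - (j : ℤ)).natAbs + abar (k + j)) * h j|
        ≤ Ψ * (ellOneNuWeight ν j * |h j|) := by
    intro j hj
    have hj' := Finset.mem_Ioc.mp hj
    have hjpos : j ≠ 0 := by omega
    have hw : ellOneNuWeight ν j = 2 * ν ^ j := by simp [ellOneNuWeight, hjpos]
    have hνpos : (0:ℝ) < 2 * ν ^ j := by positivity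
    have hq : |abar ((k : ℤ) - (j : ℤ)).natAbs + abar (k + j)| / (2 * ν ^ j) ≤ Ψ :=
      (Finset.le_fold_max _).mpr (Or.inr ⟨j, hj, le_rfl⟩)
    rw [abs_mul, hw]
    calc |abar ((k : ℤ) - (j : ℤ)).natAbs + abar (k + j)| * |h j|
        = (|abar ((k : ℤ) - (j : ℤ)).natAbs + abar (k + j)| / (2 * ν ^ j))
            * (2 * ν ^ j * |h j|) := by field_simp
      _ ≤ Ψ * (2 * ν ^ j * |h j|) := by
          apply mul_le_mul_of_nonneg_right hq; positivity
  calc |∑ j ∈ Finset.Ioc n (k + N),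
          (abar ((k : ℤ) - (j : ℤ)).natAbs + abar (k + j)) * h j|
      ≤ ∑ j ∈ Finset.Ioc n (k + N),
          |(abar ((k : ℤ) - (j : ℤ)).natAbs + abar (k + j)) * h j| :=
        Finset.abs_sum_le_sum_abs _ _
    _ ≤ ∑ j ∈ Finset.Ioc n (k + N), Ψ * (ellOneNuWeight ν j * |h j|) :=
        Finset.sum_le_sum hterm
    _ = Ψ * ∑ j ∈ Finset.Ioc n (k + N), ellOneNuWeight ν j * |h j| := by
        rw [Finset.mul_sum]
    _ ≤ Ψ * ellOneNuNorm ν h := by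
        apply mul_le_mul_of_nonneg_left _ hΨ0
        exact Summable.sum_le_tsum _ (fun j _ => by
          have : 0 ≤ ellOneNuWeight ν j := by
            by_cases hj : j = 0 <;> simp [ellOneNuWeight, hj] <;> positivity
          positivity) hh
end

section
/- Let ν ≥ 1 and let n ≥ 1 be an integer. Let T be the bounded linear operator on ℓ¹_ν defined by (T b)₀ = 0 and (T b)_k = b_{k+1} − b_{k−1} for k ≥ 1, let P^n be the truncation defined by (P^n b)_k = b_k for 0 ≤ k ≤ n and (P^n b)_k = 0 for k > n, and set T^I := T − P^n T P^n. Then the operator norm of T^I on ℓ¹_ν satisfies ‖T^I‖ ≤ 1/ν + ν. -/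
/-- The tridiagonal Chebyshev integration operator `T`: `(Tb)₀ = 0` and
`(Tb)_k = b_{k+1} − b_{k−1}` for `k ≥ 1`. -/
def chebT (b : ℕ → ℝ) (k : ℕ) : ℝ :=
  if k = 0 then 0 else b (k + 1) - b (k - 1)

/-- The truncation `P^n`: `(P^n b)_k = b_k` for `k ≤ n` and `0` for `k > n`. -/
def truncProj (n : ℕ) (b : ℕ → ℝ) (k : ℕ) : ℝ :=
  if k ≤ n then b k else 0

/-- The operator `T^I := T − Pⁿ T Pⁿ`. -/
def chebTI (n : ℕ) (b : ℕ → ℝ) (k : ℕ) : ℝ :=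
  chebT b k - truncProj n (chebT (truncProj n b)) k

/-- **Norm bound for `T^I = T − Pⁿ T Pⁿ` on `ℓ¹_ν`:** `‖T^I‖ ≤ 1/ν + ν`. -/
theorem chebTI_opNorm_bound (ν : ℝ) (hν : 1 ≤ ν) (n : ℕ) (hn : 1 ≤ n) :
    ∀ b : ℕ → ℝ, MemEllOneNu ν b →
      MemEllOneNu ν (chebTI n b) ∧
      ellOneNuNorm ν (chebTI n b) ≤ (1 / ν + ν) * ellOneNuNorm ν b := by
  intro b hb
  have hν0 : (0:ℝ) < ν := lt_of_lt_of_le one_pos hν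
  set ω := ellOneNuWeight ν with hω
  have hωnonneg : ∀ k, 0 ≤ ω k := by
    intro k
    simp only [hω, ellOneNuWeight]
    split
    · norm_num
    · positivity
  have h1 : ∀ k, ν * ω k ≤ ω (k + 1) := by
    intro k
    simp only [hω, ellOneNuWeight, Nat.succ_ne_zero, if_false]
    split
    · rename_i h; subst h; simpa using by nlinarith
    · rename_i h
      have : 2 * ν ^ (k + 1) = ν * (2 * ν ^ k) := by ring
      rw [this]
  have h2 : ∀ k, 2 ≤ k → ω k ≤ ν * ω (k - 1) := by
    intro k hk
    obtain ⟨m, rfl⟩ : ∃ m, k = m + 2 := ⟨k - 2, by omega⟩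
    simp only [hω, ellOneNuWeight]
    norm_num
    have : 2 * ν ^ (m + 2) = ν * (2 * ν ^ (m + 1)) := by ring
    rw [this]
  set F : ℕ → ℝ := fun k => ω k * |b k| with hF
  have hFnonneg : ∀ k, 0 ≤ F k := fun k => mul_nonneg (hωnonneg k) (abs_nonneg _)
  set g : ℕ → ℝ := fun k =>
    if k = 0 then 0 else (1 / ν) * F (k + 1) + ν * F (k - 1) with hg
  have hgnonneg : ∀ k, 0 ≤ g k := by
    intro k
    simp only [hg]
    split
    · exact le_rfl
    · exact add_nonneg (mul_nonneg (by positivity) (hFnonneg _))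
        (mul_nonneg hν0.le (hFnonneg _))
  -- pointwise bound
  have hpt : ∀ k, ω k * |chebTI n b k| ≤ g k := by
    intro k
    rcases Nat.eq_zero_or_pos k with hk0 | hk1
    · subst hk0
      have : chebTI n b 0 = 0 := by
        simp [chebTI, chebT, truncProj]
      rw [this, abs_zero, mul_zero]
      exact hgnonneg 0
    · have hk0 : k ≠ 0 := hk1.ne'
      rcases lt_trichotomy k n with hkn | hkn | hkn
      · have hz : chebTI n b k = 0 := by
          have c1 : k ≤ n := hkn.le
          have c2 : k + 1 ≤ n := by omega
          have c3 : k - 1 ≤ n := by omega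
          simp only [chebTI, chebT, truncProj, if_neg hk0, if_pos c1, if_pos c2,
            if_pos c3, sub_self]
        rw [hz, abs_zero, mul_zero]
        exact hgnonneg k
      · have hz : chebTI n b k = b (k + 1) := by
          have c1 : k ≤ n := hkn.le
          have c2 : ¬ (k + 1 ≤ n) := by omega
          have c3 : k - 1 ≤ n := by omega
          simp only [chebTI, chebT, truncProj, if_neg hk0, if_pos c1, if_neg c2, if_pos c3]
          ring
        rw [hz]
        have hb1 : ω k * |b (k + 1)| ≤ (1 / ν) * F (k + 1) := by
          simp only [hF]
          rw [one_div, inv_mul_eq_div, le_div_iff₀ hν0]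
          nlinarith [mul_le_mul_of_nonneg_right (h1 k) (abs_nonneg (b (k + 1)))]
        have : (0:ℝ) ≤ ν * F (k - 1) := mul_nonneg hν0.le (hFnonneg _)
        simp only [hg, if_neg hk0]
        linarith
      · have hz : chebTI n b k = b (k + 1) - b (k - 1) := by
          have c1 : ¬ k ≤ n := by omega
          simp only [chebTI, chebT, truncProj, if_neg hk0, if_neg c1, sub_zero]
        rw [hz]
        have habs : |b (k + 1) - b (k - 1)| ≤ |b (k + 1)| + |b (k - 1)| :=
          abs_sub (b (k + 1)) (b (k - 1))
        have hb1 : ω k * |b (k + 1)| ≤ (1 / ν) * F (k + 1) := by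
          simp only [hF]
          rw [one_div, inv_mul_eq_div, le_div_iff₀ hν0]
          nlinarith [mul_le_mul_of_nonneg_right (h1 k) (abs_nonneg (b (k + 1)))]
        have hb2 : ω k * |b (k - 1)| ≤ ν * F (k - 1) := by
          simp only [hF]
          rw [← mul_assoc]
          exact mul_le_mul_of_nonneg_right (h2 k (by omega)) (abs_nonneg _)
        have := mul_le_mul_of_nonneg_left habs (hωnonneg k)
        simp only [hg, if_neg hk0]
        nlinarith
  -- summability of the pieces
  have hFs : Summable F := hb
  have hF1 : Summable (fun k => (1 / ν) * F (k + 1)) :=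
    ((summable_nat_add_iff 1).mpr hFs).mul_left _
  set G2 : ℕ → ℝ := fun k => if k = 0 then 0 else ν * F (k - 1) with hG2def
  have hG2shift : (fun k => G2 (k + 1)) = fun k => ν * F k := by
    funext k
    simp [hG2def]
  have hG2 : Summable G2 := by
    refine (summable_nat_add_iff 1).mp ?_
    rw [hG2shift]
    exact hFs.mul_left ν
  have hH : Summable (fun k => (1 / ν) * F (k + 1) + G2 k) := hF1.add hG2
  have hgleH : ∀ k, g k ≤ (1 / ν) * F (k + 1) + G2 k := by
    intro k
    rcases eq_or_ne k 0 with rfl | hk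
    · simp only [hg, hG2def, if_pos rfl]
      exact add_nonneg (mul_nonneg (by positivity) (hFnonneg _)) le_rfl
    · simp only [hg, hG2def, if_neg hk]
      exact le_rfl
  have hgs : Summable g := Summable.of_nonneg_of_le hgnonneg hgleH hH
  have hmem : Summable (fun k => ω k * |chebTI n b k|) :=
    Summable.of_nonneg_of_le (fun k => mul_nonneg (hωnonneg k) (abs_nonneg _)) hpt hgs
  refine ⟨hmem, ?_⟩
  have hnorm : ellOneNuNorm ν (chebTI n b) = ∑' k, ω k * |chebTI n b k| := rfl
  have hnormb : ellOneNuNorm ν b = ∑' k, F k := rfl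
  rw [hnorm, hnormb]
  have step1 : ∑' k, ω k * |chebTI n b k| ≤ ∑' k, g k := Summable.tsum_le_tsum hpt hmem hgs
  have step2 : ∑' k, g k ≤ ∑' k, ((1 / ν) * F (k + 1) + G2 k) := Summable.tsum_le_tsum hgleH hgs hH
  have hsplit : ∑' k, ((1 / ν) * F (k + 1) + G2 k)
      = (∑' k, (1 / ν) * F (k + 1)) + ∑' k, G2 k := Summable.tsum_add hF1 hG2
  have ht1 : ∑' k, (1 / ν) * F (k + 1) ≤ (1 / ν) * ∑' k, F k := by
    rw [tsum_mul_left]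
    have := Summable.tsum_eq_zero_add hFs
    have hle : ∑' k, F (k + 1) ≤ ∑' k, F k := by
      rw [this]
      have := hFnonneg 0
      linarith
    exact mul_le_mul_of_nonneg_left hle (by positivity)
  have ht2 : ∑' k, G2 k = ν * ∑' k, F k := by
    rw [Summable.tsum_eq_zero_add hG2]
    have h0 : G2 0 = 0 := by simp [hG2def]
    have hshift : ∑' k, G2 (k + 1) = ∑' k, ν * F k :=
      tsum_congr fun k => by simp [hG2def]
    rw [h0, zero_add, hshift, tsum_mul_left]
  calc ∑' k, ω k * |chebTI n b k| ≤ ∑' k, g k := step1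
    _ ≤ (∑' k, (1 / ν) * F (k + 1)) + ∑' k, G2 k := by rw [← hsplit]; exact step2
    _ ≤ (1 / ν) * (∑' k, F k) + ν * (∑' k, F k) := by rw [ht2]; linarith
    _ = (1 / ν + ν) * ∑' k, F k := by ring
end

section
/- Let u₁ and u₂ be linearly independent vectors in a two-dimensional real inner product space V, and let α ∈ (0, π) be the angle between them, i.e. cos α = ⟨u₁, u₂⟩/(‖u₁‖ ‖u₂‖). Then for every u ∈ V, writing u = a₁ u₁ + a₂ u₂ with a₁, a₂ ∈ ℝ, one has ‖a₁ u₁‖ ≤ ‖u‖ / sin α and ‖a₂ u₂‖ ≤ ‖u‖ / sin α. Consequently, the oblique projection of V onto span{u₁} along span{u₂} and the oblique projection onto span{u₂} along span{u₁} each have operator norm at most 1/sin α. -/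
open scoped RealInnerProductSpace

lemma oblique_aux {V : Type*} [NormedAddCommGroup V] [InnerProductSpace ℝ V]
    (u₁ u₂ : V) (α : ℝ) (hs : 0 ≤ Real.sin α)
    (hinner : ⟪u₁, u₂⟫ = ‖u₁‖ * ‖u₂‖ * Real.cos α) (a₁ a₂ : ℝ) :
    ‖a₁ • u₁‖ * Real.sin α ≤ ‖a₁ • u₁ + a₂ • u₂‖ := by
  have h1 : ‖a₁ • u₁ + a₂ • u₂‖ ^ 2
      = ‖a₁ • u₁‖ ^ 2 + 2 * (a₁ * a₂ * ⟪u₁, u₂⟫) + ‖a₂ • u₂‖ ^ 2 := by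
    rw [@norm_add_sq_real, real_inner_smul_left, real_inner_smul_right]; ring
  have h2 : ‖a₁ • u₁‖ = |a₁| * ‖u₁‖ := by rw [norm_smul]; simp
  have h3 : ‖a₂ • u₂‖ = |a₂| * ‖u₂‖ := by rw [norm_smul]; simp
  have hpyth := Real.sin_sq_add_cos_sq α
  have hsq : (‖a₁ • u₁‖ * Real.sin α) ^ 2 ≤ ‖a₁ • u₁ + a₂ • u₂‖ ^ 2 := by
    rw [h1, hinner, h2, h3]
    simp only [mul_pow, sq_abs]
    nlinarith [sq_nonneg (a₁ * ‖u₁‖ * Real.cos α + a₂ * ‖u₂‖), hpyth,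
      sq_nonneg (a₁ * ‖u₁‖), sq_nonneg (a₂ * ‖u₂‖)]
  have hL : 0 ≤ ‖a₁ • u₁‖ * Real.sin α := mul_nonneg (norm_nonneg _) hs
  nlinarith [norm_nonneg (a₁ • u₁ + a₂ • u₂)]

/-- **Oblique projection bound in the plane.** If `u₁, u₂` are linearly independent vectors
in a two-dimensional real inner product space and `α ∈ (0,π)` is the angle between them,
then for `u = a₁ u₁ + a₂ u₂` one has `‖a₁ u₁‖ ≤ ‖u‖/sin α` and `‖a₂ u₂‖ ≤ ‖u‖/sin α`;
consequently the oblique projections onto `span{u₁}` along `span{u₂}` and onto `span{u₂}`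
along `span{u₁}` have operator norm at most `1/sin α`. -/
theorem oblique_projection_bound_dim_two
    {V : Type*} [NormedAddCommGroup V] [InnerProductSpace ℝ V] [FiniteDimensional ℝ V]
    (hdim : Module.finrank ℝ V = 2)
    (u₁ u₂ : V) (hind : LinearIndependent ℝ ![u₁, u₂])
    (α : ℝ) (hα₀ : 0 < α) (hαπ : α < Real.pi)
    (hcos : Real.cos α = ⟪u₁, u₂⟫ / (‖u₁‖ * ‖u₂‖)) :
    (∀ a₁ a₂ : ℝ,
      ‖a₁ • u₁‖ ≤ ‖a₁ • u₁ + a₂ • u₂‖ / Real.sin α ∧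
      ‖a₂ • u₂‖ ≤ ‖a₁ • u₁ + a₂ • u₂‖ / Real.sin α) ∧
    (∀ P : V →ₗ[ℝ] V, (∀ a₁ a₂ : ℝ, P (a₁ • u₁ + a₂ • u₂) = a₁ • u₁) →
      ∀ u : V, ‖P u‖ ≤ ‖u‖ / Real.sin α) ∧
    (∀ P : V →ₗ[ℝ] V, (∀ a₁ a₂ : ℝ, P (a₁ • u₁ + a₂ • u₂) = a₂ • u₂) →
      ∀ u : V, ‖P u‖ ≤ ‖u‖ / Real.sin α) := by
  have hsin : 0 < Real.sin α := Real.sin_pos_of_pos_of_lt_pi hα₀ hαπ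
  have hu₁ : u₁ ≠ 0 := by have := hind.ne_zero 0; simpa using this
  have hu₂ : u₂ ≠ 0 := by have := hind.ne_zero 1; simpa using this
  have hn₁ : (0:ℝ) < ‖u₁‖ := norm_pos_iff.mpr hu₁
  have hn₂ : (0:ℝ) < ‖u₂‖ := norm_pos_iff.mpr hu₂
  have hinner : ⟪u₁, u₂⟫ = ‖u₁‖ * ‖u₂‖ * Real.cos α := by
    field_simp at hcos; linarith
  have hinner' : ⟪u₂, u₁⟫ = ‖u₂‖ * ‖u₁‖ * Real.cos α := by
    rw [real_inner_comm]; rw [hinner]; ring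
  have main : ∀ a₁ a₂ : ℝ,
      ‖a₁ • u₁‖ ≤ ‖a₁ • u₁ + a₂ • u₂‖ / Real.sin α ∧
      ‖a₂ • u₂‖ ≤ ‖a₁ • u₁ + a₂ • u₂‖ / Real.sin α := by
    intro a₁ a₂
    constructor
    · rw [le_div_iff₀ hsin]
      exact oblique_aux u₁ u₂ α hsin.le hinner a₁ a₂
    · rw [le_div_iff₀ hsin]
      have := oblique_aux u₂ u₁ α hsin.le hinner' a₂ a₁
      rwa [add_comm] at this
  refine ⟨main, ?_, ?_⟩ <;>
  · intro P hP u
    have hspan : Submodule.span ℝ (Set.range ![u₁, u₂]) = ⊤ := by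
      apply hind.span_eq_top_of_card_eq_finrank
      simp [hdim]
    have hmem : u ∈ Submodule.span ℝ ({u₁, u₂} : Set V) := by
      have : (Set.range ![u₁, u₂] : Set V) = {u₁, u₂} := by
        simp [Matrix.range_cons, Matrix.range_empty]
        ext x; simp; tauto
      rw [← this, hspan]; trivial
    obtain ⟨a₁, a₂, rfl⟩ := Submodule.mem_span_pair.mp hmem
    rw [hP a₁ a₂]
    first
    | exact (main a₁ a₂).1
    | exact (main a₁ a₂).2
end
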